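/- Let g ≥ 1, let m be a positive definite symmetric half-integral g×g matrix, n ∈ ℤ, r ∈ ℤ^g, and let c = c₁c₂ with c₁, c₂ positive coprime integers. Let c̄₁ be an inverse of c₁ modulo c₂ and c̄₂ an inverse of c₂ modulo c₁. Then for either choice of sign ±, H^±_{m,c}(n,r) = H^±_{c₁m, c₂}(n·c̄₁, r) · H^±_{c₂m, c₁}(n·c̄₂, r). -/

import Mathlib

/-- A `g×g` rational matrix is positive definite symmetric half-integral if it is
symmetric, positive definite, `2m` has integer entries, and the diagonal entries
of `m` are integers (i.e. the diagonal of `2m` is even). -/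
def IsPDHalfIntegral {g : ℕ} (m : Matrix (Fin g) (Fin g) ℚ) : Prop :=
  m.IsSymm ∧ (∀ x : Fin g → ℚ, x ≠ 0 → 0 < dotProduct x (m.mulVec x)) ∧
    (∀ i j, ∃ z : ℤ, 2 * m i j = (z : ℚ)) ∧ (∀ i, ∃ z : ℤ, m i i = (z : ℚ))

/-- The Kloosterman sum `H_{m,c}(n,r,n',r')
  = ∑_{λ mod c} ∑_{d mod c, (d,c)=1} e^{2πi((λᵀmλ + rᵀλ + n)·d̄ + n'·d + r'ᵀλ)/c}`,
where `λ` runs over the complete residue system `{0,…,c-1}^g`, `d` over `{0,…,c-1}`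
coprime to `c`, and `d̄` is the multiplicative inverse of `d` modulo `c`. -/
noncomputable def kloostermanH (g : ℕ) (m : Matrix (Fin g) (Fin g) ℚ) (c : ℕ)
    (n n' : ℤ) (r r' : Fin g → ℤ) : ℂ :=
  ∑ d ∈ (Finset.range c).filter (fun d => Nat.Coprime d c),
    ∑ lam ∈ Fintype.piFinset (fun _ : Fin g => Finset.range c),
      Complex.exp (2 * Real.pi * Complex.I *
        ((((∑ i, ∑ j, (lam i : ℚ) * m i j * (lam j : ℚ))
              + (∑ j, (r j : ℚ) * (lam j : ℚ)) + (n : ℚ)) *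
              ((((d : ZMod c)⁻¹).val : ℚ))
            + (n' : ℚ) * (d : ℚ) + ∑ j, (r' j : ℚ) * (lam j : ℚ) : ℚ) : ℂ) / (c : ℂ))

/-- `H^±_{m,c}(n,r) := H_{m,c}(n,r,n,±r)`; the sign is `s = 1` or `s = -1`. -/
noncomputable def kloostermanHpm (g : ℕ) (m : Matrix (Fin g) (Fin g) ℚ) (c : ℕ)
    (n : ℤ) (r : Fin g → ℤ) (s : ℤ) : ℂ :=
  kloostermanH g m c n n r (fun j => s * r j)

/-- The determinant of the `(g+1)×(g+1)` block matrix `[[2n, rᵀ],[r, 2m]]`. -/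
def blockDet {R : Type*} [CommRing R] (g : ℕ) (n : R) (r : Fin g → R)
    (m : Matrix (Fin g) (Fin g) R) : R :=
  (Matrix.fromBlocks (Matrix.of fun (_ : Unit) (_ : Unit) => 2 * n)
    (Matrix.of fun (_ : Unit) j => r j) (Matrix.of fun i (_ : Unit) => r i)
    ((2 : R) • m)).det

open Finset

noncomputable def psi (c : ℕ) (x : ℚ) : ℂ :=
  Complex.exp (2 * Real.pi * Complex.I * (x : ℂ) / (c : ℂ))

lemma psi_add (c : ℕ) (x y : ℚ) : psi c (x + y) = psi c x * psi c y := by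
  rw [psi, psi, psi, ← Complex.exp_add]
  congr 1
  push_cast
  ring

lemma psi_int_mul (c : ℕ) (hc : c ≠ 0) (k : ℤ) : psi c ((c : ℚ) * (k : ℚ)) = 1 := by
  rw [psi]
  have hc' : (c : ℂ) ≠ 0 := Nat.cast_ne_zero.mpr hc
  have h : 2 * Real.pi * Complex.I * ((((c : ℚ) * (k : ℚ)) : ℚ) : ℂ) / (c : ℂ)
      = (k : ℂ) * (2 * Real.pi * Complex.I) := by
    field_simp
    push_cast
    ring
  rw [h, Complex.exp_int_mul_two_pi_mul_I]

lemma psi_congr (c : ℕ) (hc : c ≠ 0) {X Y : ℤ} (h : X ≡ Y [ZMOD (c : ℤ)]) :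
    psi c (X : ℚ) = psi c (Y : ℚ) := by
  obtain ⟨k, hk⟩ := Int.modEq_iff_dvd.mp h
  have hY : (Y : ℚ) = (X : ℚ) + (c : ℚ) * (k : ℚ) := by
    have : (Y : ℚ) - (X : ℚ) = ((c : ℤ) * k : ℤ) := by
      rw [← hk]; push_cast; ring
    push_cast at this ⊢
    linarith
  rw [hY, psi_add, psi_int_mul c hc, mul_one]

lemma psi_factor (c₁ c₂ : ℕ) (hc₁ : c₁ ≠ 0) (hc₂ : c₂ ≠ 0) (x y : ℚ) :
    psi c₂ x * psi c₁ y = psi (c₁ * c₂) ((c₁ : ℚ) * x + (c₂ : ℚ) * y) := by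
  rw [psi, psi, psi, ← Complex.exp_add]
  congr 1
  have h1 : (c₁ : ℂ) ≠ 0 := Nat.cast_ne_zero.mpr hc₁
  have h2 : (c₂ : ℂ) ≠ 0 := Nat.cast_ne_zero.mpr hc₂
  field_simp
  push_cast
  ring
open Finset

/-- integer value of the quadratic form -/
def Zq {g : ℕ} (z : Fin g → Fin g → ℤ) (dg : Fin g → ℤ) (l : Fin g → ℤ) : ℤ :=
  (∑ i, dg i * l i ^ 2) +
    ∑ p ∈ univ.offDiag.filter (fun p : Fin g × Fin g => p.1 < p.2), l p.1 * z p.1 p.2 * l p.2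

lemma quad_eq {g : ℕ} (m : Matrix (Fin g) (Fin g) ℚ) (hsymm : ∀ i j, m i j = m j i)
    (z : Fin g → Fin g → ℤ) (dg : Fin g → ℤ)
    (hz : ∀ i j, 2 * m i j = (z i j : ℚ)) (hdg : ∀ i, m i i = (dg i : ℚ))
    (l : Fin g → ℤ) :
    (∑ i, ∑ j, (l i : ℚ) * m i j * (l j : ℚ)) = (Zq z dg l : ℚ) := by
  classical
  rw [← Finset.sum_product' (s := univ) (t := univ)
    (f := fun i j => (l i : ℚ) * m i j * (l j : ℚ))]
  rw [show (univ ×ˢ univ : Finset (Fin g × Fin g)) = univ.diag ∪ univ.offDiag from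
    (Finset.diag_union_offDiag _).symm,
    Finset.sum_union (Finset.disjoint_diag_offDiag _), Finset.sum_diag]
  have hsplit := Finset.sum_filter_add_sum_filter_not (univ.offDiag : Finset (Fin g × Fin g))
    (fun p => p.1 < p.2) (fun p => (l p.1 : ℚ) * m p.1 p.2 * (l p.2 : ℚ))
  rw [← hsplit]
  have hswap : ∑ p ∈ univ.offDiag.filter (fun p : Fin g × Fin g => ¬ p.1 < p.2),
      (l p.1 : ℚ) * m p.1 p.2 * (l p.2 : ℚ)
      = ∑ p ∈ univ.offDiag.filter (fun p : Fin g × Fin g => p.1 < p.2),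
      (l p.1 : ℚ) * m p.1 p.2 * (l p.2 : ℚ) := by
    refine Finset.sum_nbij' (i := Prod.swap) (j := Prod.swap) ?_ ?_ ?_ ?_ ?_
    · intro p hp
      simp only [Finset.mem_filter, Finset.mem_offDiag, Finset.mem_univ, true_and] at hp ⊢
      obtain ⟨hne, hnlt⟩ := hp
      exact ⟨hne.symm, lt_of_le_of_ne (not_lt.mp hnlt) (Ne.symm hne)⟩
    · intro p hp
      simp only [Finset.mem_filter, Finset.mem_offDiag, Finset.mem_univ, true_and] at hp ⊢
      obtain ⟨hne, hlt⟩ := hp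
      exact ⟨hne.symm, not_lt.mpr hlt.le⟩
    · intro p _; exact Prod.swap_swap p
    · intro p _; exact Prod.swap_swap p
    · intro p _
      simp only [Prod.fst_swap, Prod.snd_swap]
      rw [hsymm p.2 p.1]; ring
  rw [hswap, ← Finset.sum_add_distrib]
  rw [Zq]
  push_cast
  congr 1
  · exact Finset.sum_congr rfl fun i _ => by rw [hdg i]; ring
  · refine Finset.sum_congr rfl fun p _ => ?_
    have hzz := hz p.1 p.2
    linear_combination (l p.1 : ℚ) * (l p.2 : ℚ) * hzz

lemma Zq_dvd_sub {g : ℕ} (z : Fin g → Fin g → ℤ) (dg : Fin g → ℤ) (N : ℤ)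
    (l l' : Fin g → ℤ) (h : ∀ i, N ∣ l i - l' i) :
    N ∣ Zq z dg l - Zq z dg l' := by
  rw [Zq, Zq]
  have : (∑ i, dg i * l i ^ 2) +
      (∑ p ∈ univ.offDiag.filter (fun p : Fin g × Fin g => p.1 < p.2),
        l p.1 * z p.1 p.2 * l p.2)
      - ((∑ i, dg i * l' i ^ 2) +
      (∑ p ∈ univ.offDiag.filter (fun p : Fin g × Fin g => p.1 < p.2),
        l' p.1 * z p.1 p.2 * l' p.2))
      = (∑ i, (dg i * l i ^ 2 - dg i * l' i ^ 2)) +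
        (∑ p ∈ univ.offDiag.filter (fun p : Fin g × Fin g => p.1 < p.2),
          (l p.1 * z p.1 p.2 * l p.2 - l' p.1 * z p.1 p.2 * l' p.2)) := by
    rw [Finset.sum_sub_distrib, Finset.sum_sub_distrib]; ring
  rw [this]
  refine dvd_add (Finset.dvd_sum fun i _ => ?_) (Finset.dvd_sum fun p _ => ?_)
  · have hi := h i
    have : dg i * l i ^ 2 - dg i * l' i ^ 2 = (l i - l' i) * (dg i * (l i + l' i)) := by ring
    rw [this]; exact hi.mul_right _
  · have h1 := h p.1
    have h2 := h p.2
    have : l p.1 * z p.1 p.2 * l p.2 - l' p.1 * z p.1 p.2 * l' p.2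
        = (l p.1 - l' p.1) * (z p.1 p.2 * l p.2) + (l p.2 - l' p.2) * (l' p.1 * z p.1 p.2) := by
      ring
    rw [this]
    exact dvd_add (h1.mul_right _) (h2.mul_right _)

lemma Zq_smul {g : ℕ} (z : Fin g → Fin g → ℤ) (dg : Fin g → ℤ) (a : ℤ) (l : Fin g → ℤ) :
    Zq z dg (fun i => a * l i) = a ^ 2 * Zq z dg l := by
  rw [Zq, Zq, mul_add, Finset.mul_sum, Finset.mul_sum]
  congr 1
  · exact Finset.sum_congr rfl fun i _ => by ring
  · exact Finset.sum_congr rfl fun p _ => by ring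

/-- Exponent of the Kloosterman sum, with `d`-data given by a unit of `ZMod c` and
`lam`-data given by a vector of `ZMod c`. -/
def kexp {g : ℕ} (m : Matrix (Fin g) (Fin g) ℚ) (c : ℕ) (n n' : ℤ) (r r' : Fin g → ℤ)
    (u : (ZMod c)ˣ) (v : Fin g → ZMod c) : ℚ :=
  ((∑ i, ∑ j, ((v i).val : ℚ) * m i j * ((v j).val : ℚ))
      + (∑ j, (r j : ℚ) * ((v j).val : ℚ)) + (n : ℚ)) *
      (((↑(u⁻¹ : (ZMod c)ˣ) : ZMod c).val : ℚ))
    + (n' : ℚ) * (((↑u : ZMod c).val : ℚ)) + ∑ j, (r' j : ℚ) * ((v j).val : ℚ)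

lemma kloostermanH_eq_units (g : ℕ) (m : Matrix (Fin g) (Fin g) ℚ) (c : ℕ) [NeZero c]
    (n n' : ℤ) (r r' : Fin g → ℤ) :
    kloostermanH g m c n n' r r' =
      ∑ u : (ZMod c)ˣ, ∑ v : Fin g → ZMod c, psi c (kexp m c n n' r r' u v) := by
  rw [kloostermanH]
  refine Finset.sum_bij' (i := fun d hd => ZMod.unitOfCoprime d (Finset.mem_filter.mp hd).2)
    (j := fun u _ => ((u : ZMod c).val : ℕ)) (fun _ _ => Finset.mem_univ _) ?_ ?_ ?_ ?_
  · intro u _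
    exact Finset.mem_filter.mpr ⟨Finset.mem_range.mpr (ZMod.val_lt _),
      ZMod.val_coe_unit_coprime u⟩
  · intro d hd
    have hlt : d < c := Finset.mem_range.mp (Finset.mem_filter.mp hd).1
    simp [ZMod.coe_unitOfCoprime, ZMod.val_cast_of_lt hlt]
  · intro u _
    apply Units.ext
    simp [ZMod.coe_unitOfCoprime, ZMod.natCast_zmod_val]
  · intro d hd
    have hlt : d < c := Finset.mem_range.mp (Finset.mem_filter.mp hd).1
    -- now the inner sums
    refine Finset.sum_nbij' (i := fun lam k => ((lam k : ℕ) : ZMod c))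
      (j := fun v k => (v k).val) (fun _ _ => Finset.mem_univ _) ?_ ?_ ?_ ?_
    · intro v _
      exact Fintype.mem_piFinset.mpr fun k => Finset.mem_range.mpr (ZMod.val_lt _)
    · intro lam hlam
      funext k
      exact ZMod.val_cast_of_lt (Finset.mem_range.mp (Fintype.mem_piFinset.mp hlam k))
    · intro v _
      funext k
      exact ZMod.natCast_zmod_val _
    · intro lam hlam
      have hvals : ∀ k, ((lam k : ZMod c)).val = lam k :=
        fun k => ZMod.val_cast_of_lt (Finset.mem_range.mp (Fintype.mem_piFinset.mp hlam k))
    -- match the exponents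
      have hinv : ((d : ZMod c)⁻¹) =
          (↑((ZMod.unitOfCoprime d (Finset.mem_filter.mp hd).2)⁻¹ : (ZMod c)ˣ) : ZMod c) := by
        rw [← ZMod.inv_coe_unit]
        congr 1
      have hval' : ((ZMod.unitOfCoprime d (Finset.mem_filter.mp hd).2 : ZMod c)).val = d := by
        simp [ZMod.coe_unitOfCoprime, ZMod.val_cast_of_lt hlt]
      rw [psi, kexp]
      simp only [hvals, hval', ← hinv]
open Finset

lemma crt_fst (c₁ c₂ : ℕ) [NeZero (c₁ * c₂)] (hcop : Nat.Coprime c₁ c₂)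
    (x : ZMod (c₁ * c₂)) :
    ((x.val : ZMod c₁)) = (ZMod.chineseRemainder hcop x).1 := by
  have h : (ZMod.castHom (dvd_mul_right c₁ c₂) (ZMod c₁)) =
      (RingHom.fst (ZMod c₁) (ZMod c₂)).comp
        ((ZMod.chineseRemainder hcop : ZMod (c₁ * c₂) →+* ZMod c₁ × ZMod c₂)) :=
    RingHom.ext_zmod _ _
  calc (x.val : ZMod c₁) = ZMod.castHom (dvd_mul_right c₁ c₂) (ZMod c₁) x := by
        rw [ZMod.castHom_apply, ZMod.natCast_val]
    _ = _ := by rw [h]; rfl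

lemma crt_snd (c₁ c₂ : ℕ) [NeZero (c₁ * c₂)] (hcop : Nat.Coprime c₁ c₂)
    (x : ZMod (c₁ * c₂)) :
    ((x.val : ZMod c₂)) = (ZMod.chineseRemainder hcop x).2 := by
  have h : (ZMod.castHom (dvd_mul_left c₂ c₁) (ZMod c₂)) =
      (RingHom.snd (ZMod c₁) (ZMod c₂)).comp
        ((ZMod.chineseRemainder hcop : ZMod (c₁ * c₂) →+* ZMod c₁ × ZMod c₂)) :=
    RingHom.ext_zmod _ _
  calc (x.val : ZMod c₂) = ZMod.castHom (dvd_mul_left c₂ c₁) (ZMod c₂) x := by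
        rw [ZMod.castHom_apply, ZMod.natCast_val]
    _ = _ := by rw [h]; rfl

lemma key_congr (N M : ℕ) (n s dM : ℤ) (hdM : (M : ℤ) * dM ≡ 1 [ZMOD (N : ℤ)])
    (Z Z' RL RL' A B A' B' Y : ℤ)
    (hZ : Z ≡ (M : ℤ) ^ 2 * Z' [ZMOD (N : ℤ)]) (hRL : RL ≡ (M : ℤ) * RL' [ZMOD (N : ℤ)])
    (hA : A ≡ A' [ZMOD (N : ℤ)]) (hB : B ≡ B' [ZMOD (N : ℤ)]) :
    (Z + RL + n) * B + n * A + s * RL ≡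
      (M : ℤ) * (((M : ℤ) * Z' + RL' + n * dM) * B' + n * dM * A' + s * RL')
        + (N : ℤ) * Y [ZMOD (N : ℤ)] := by
  rw [← ZMod.intCast_eq_intCast_iff] at hdM hZ hRL hA hB ⊢
  have hN0 : ((N : ℤ) : ZMod N) = 0 := by push_cast; exact ZMod.natCast_self N
  push_cast at hdM hZ hRL hA hB ⊢
  push_cast at hN0
  linear_combination (↑B : ZMod N) * hZ + ((↑B : ZMod N) + ↑s) * hRL + (↑n : ZMod N) * hA
    + ((↑M : ZMod N) ^ 2 * ↑Z' + (↑M : ZMod N) * ↑RL' + ↑n) * hB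
    - (↑n * (↑A' + ↑B') : ZMod N) * hdM - (↑Y : ZMod N) * hN0

lemma pointwise {g : ℕ} (m : Matrix (Fin g) (Fin g) ℚ)
    (hsymm : ∀ i j, m i j = m j i) (z : Fin g → Fin g → ℤ) (dg : Fin g → ℤ)
    (hz : ∀ i j, 2 * m i j = (z i j : ℚ)) (hdg : ∀ i, m i i = (dg i : ℚ))
    (n s : ℤ) (r : Fin g → ℤ) (c₁ c₂ : ℕ) [NeZero c₁] [NeZero c₂]
    (hcop : Nat.Coprime c₁ c₂) (d₁ d₂ : ℤ)
    (hd₁ : (c₁ : ℤ) * d₁ ≡ 1 [ZMOD (c₂ : ℤ)]) (hd₂ : (c₂ : ℤ) * d₂ ≡ 1 [ZMOD (c₁ : ℤ)])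
    (u : (ZMod (c₁ * c₂))ˣ) (v : Fin g → ZMod (c₁ * c₂))
    (u₁ : (ZMod c₁)ˣ) (u₂ : (ZMod c₂)ˣ) (v₁ : Fin g → ZMod c₁) (v₂ : Fin g → ZMod c₂)
    (hu : ZMod.chineseRemainder hcop ((u : (ZMod (c₁ * c₂))ˣ) : ZMod (c₁ * c₂))
      = ((u₁ : ZMod c₁), (u₂ : ZMod c₂)))
    (huinv : ZMod.chineseRemainder hcop ((↑(u⁻¹) : ZMod (c₁ * c₂)))
      = ((↑(u₁⁻¹) : ZMod c₁), (↑(u₂⁻¹) : ZMod c₂)))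
    (hv : ∀ i, ZMod.chineseRemainder hcop (v i)
      = ((c₂ : ZMod c₁) * v₁ i, (c₁ : ZMod c₂) * v₂ i)) :
    psi (c₁ * c₂) (kexp m (c₁ * c₂) n n r (fun j => s * r j) u v)
      = psi c₂ (kexp ((c₁ : ℚ) • m) c₂ (n * d₁) (n * d₁) r (fun j => s * r j) u₂ v₂)
      * psi c₁ (kexp ((c₂ : ℚ) • m) c₁ (n * d₂) (n * d₂) r (fun j => s * r j) u₁ v₁) := by
  haveI : NeZero (c₁ * c₂) := ⟨Nat.mul_ne_zero (NeZero.ne c₁) (NeZero.ne c₂)⟩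
  have hc₁' : c₁ ≠ 0 := NeZero.ne c₁
  have hc₂' : c₂ ≠ 0 := NeZero.ne c₂
  -- integer data
  set L : Fin g → ℤ := fun i => ((v i).val : ℤ) with hL
  set L₁ : Fin g → ℤ := fun i => ((v₁ i).val : ℤ) with hL₁
  set L₂ : Fin g → ℤ := fun i => ((v₂ i).val : ℤ) with hL₂
  set A : ℤ := (((u : ZMod (c₁ * c₂))).val : ℤ) with hA
  set B : ℤ := (((↑(u⁻¹) : ZMod (c₁ * c₂))).val : ℤ) with hB
  set A₁ : ℤ := (((u₁ : ZMod c₁)).val : ℤ) with hA₁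
  set B₁ : ℤ := (((↑(u₁⁻¹) : ZMod c₁)).val : ℤ) with hB₁
  set A₂ : ℤ := (((u₂ : ZMod c₂)).val : ℤ) with hA₂
  set B₂ : ℤ := (((↑(u₂⁻¹) : ZMod c₂)).val : ℤ) with hB₂
  set RL : ℤ := ∑ j, r j * L j with hRL
  set RL₁ : ℤ := ∑ j, r j * L₁ j with hRL₁
  set RL₂ : ℤ := ∑ j, r j * L₂ j with hRL₂
  set X : ℤ := (Zq z dg L + RL + n) * B + n * A + s * RL with hX
  set X₁ : ℤ := ((c₂ : ℤ) * Zq z dg L₁ + RL₁ + n * d₂) * B₁ + n * d₂ * A₁ + s * RL₁ with hX₁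
  set X₂ : ℤ := ((c₁ : ℤ) * Zq z dg L₂ + RL₂ + n * d₁) * B₂ + n * d₁ * A₂ + s * RL₂ with hX₂
  -- bridges to the rational exponents
  have hQ : (∑ i, ∑ j, ((v i).val : ℚ) * m i j * ((v j).val : ℚ)) = ((Zq z dg L : ℤ) : ℚ) := by
    rw [← quad_eq m hsymm z dg hz hdg L]
    refine Finset.sum_congr rfl fun i _ => Finset.sum_congr rfl fun j _ => ?_
    rw [hL]; push_cast; ring
  have hQ1 : (∑ i, ∑ j, ((v₁ i).val : ℚ) * ((c₂ : ℚ) • m) i j * ((v₁ j).val : ℚ))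
      = (((c₂ : ℤ) * Zq z dg L₁ : ℤ) : ℚ) := by
    push_cast
    rw [← quad_eq m hsymm z dg hz hdg L₁, Finset.mul_sum]
    refine Finset.sum_congr rfl fun i _ => ?_
    rw [Finset.mul_sum]
    refine Finset.sum_congr rfl fun j _ => ?_
    rw [hL₁]; simp [Matrix.smul_apply]; push_cast; ring
  have hQ2 : (∑ i, ∑ j, ((v₂ i).val : ℚ) * ((c₁ : ℚ) • m) i j * ((v₂ j).val : ℚ))
      = (((c₁ : ℤ) * Zq z dg L₂ : ℤ) : ℚ) := by
    push_cast
    rw [← quad_eq m hsymm z dg hz hdg L₂, Finset.mul_sum]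
    refine Finset.sum_congr rfl fun i _ => ?_
    rw [Finset.mul_sum]
    refine Finset.sum_congr rfl fun j _ => ?_
    rw [hL₂]; simp [Matrix.smul_apply]; push_cast; ring
  have hRLcast : ∀ (c : ℕ) (w : Fin g → ZMod c) (W : Fin g → ℤ), (W = fun i => ((w i).val : ℤ)) →
      (∑ j, (r j : ℚ) * ((w j).val : ℚ)) = ((∑ j, r j * W j : ℤ) : ℚ) := by
    intro c w W hW
    push_cast [hW]
    rfl
  have hSR : ∀ (c : ℕ) (w : Fin g → ZMod c) (W : Fin g → ℤ), (W = fun i => ((w i).val : ℤ)) →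
      (∑ j, ((s * r j : ℤ) : ℚ) * ((w j).val : ℚ)) = (s : ℚ) * ((∑ j, r j * W j : ℤ) : ℚ) := by
    intro c w W hW
    push_cast [hW, Finset.mul_sum]
    exact Finset.sum_congr rfl fun j _ => by ring
  have hXq : ((X : ℤ) : ℚ) = kexp m (c₁ * c₂) n n r (fun j => s * r j) u v := by
    rw [kexp, hQ, hRLcast (c₁*c₂) v L hL, hSR (c₁*c₂) v L hL, hX, hRL, hA, hB]
    push_cast
    ring
  have hX1q : ((X₁ : ℤ) : ℚ) = kexp ((c₂ : ℚ) • m) c₁ (n * d₂) (n * d₂) r (fun j => s * r j) u₁ v₁ := by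
    rw [kexp, hQ1, hRLcast c₁ v₁ L₁ hL₁, hSR c₁ v₁ L₁ hL₁, hX₁, hRL₁, hA₁, hB₁]
    push_cast
    ring
  have hX2q : ((X₂ : ℤ) : ℚ) = kexp ((c₁ : ℚ) • m) c₂ (n * d₁) (n * d₁) r (fun j => s * r j) u₂ v₂ := by
    rw [kexp, hQ2, hRLcast c₂ v₂ L₂ hL₂, hSR c₂ v₂ L₂ hL₂, hX₂, hRL₂, hA₂, hB₂]
    push_cast
    ring
  -- helpers
  have modeq_of_dvd : ∀ (N a b : ℤ), N ∣ a - b → a ≡ b [ZMOD N] := fun N a b h =>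
    Int.modEq_iff_dvd.mpr (by rw [show b - a = -(a - b) by ring]; exact dvd_neg.mpr h)
  have modeq_of_sub : ∀ (N : ℕ) (a b : ℤ), (((a - b : ℤ) : ZMod N) = 0) → a ≡ b [ZMOD (N : ℤ)] :=
    fun N a b h => modeq_of_dvd N a b ((ZMod.intCast_zmod_eq_zero_iff_dvd _ _).mp h)
  -- componentwise congruences
  have hLd : ∀ i, (c₁ : ℤ) ∣ L i - (c₂ : ℤ) * L₁ i := by
    intro i
    have e1 : ((L i - (c₂ : ℤ) * L₁ i : ℤ) : ZMod c₁) = 0 := by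
      simp only [hL, hL₁]
      push_cast
      rw [crt_fst c₁ c₂ hcop (v i), hv i, ZMod.natCast_zmod_val]
      ring
    exact (ZMod.intCast_zmod_eq_zero_iff_dvd _ _).mp e1
  have hLd2 : ∀ i, (c₂ : ℤ) ∣ L i - (c₁ : ℤ) * L₂ i := by
    intro i
    have e1 : ((L i - (c₁ : ℤ) * L₂ i : ℤ) : ZMod c₂) = 0 := by
      simp only [hL, hL₂]
      push_cast
      rw [crt_snd c₁ c₂ hcop (v i), hv i, ZMod.natCast_zmod_val]
      ring
    exact (ZMod.intCast_zmod_eq_zero_iff_dvd _ _).mp e1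
  have hZ1 : Zq z dg L ≡ (c₂ : ℤ) ^ 2 * Zq z dg L₁ [ZMOD (c₁ : ℤ)] := by
    have hd := Zq_dvd_sub z dg (c₁ : ℤ) L (fun i => (c₂ : ℤ) * L₁ i) hLd
    rw [Zq_smul] at hd
    exact modeq_of_dvd _ _ _ hd
  have hZ2 : Zq z dg L ≡ (c₁ : ℤ) ^ 2 * Zq z dg L₂ [ZMOD (c₂ : ℤ)] := by
    have hd := Zq_dvd_sub z dg (c₂ : ℤ) L (fun i => (c₁ : ℤ) * L₂ i) hLd2
    rw [Zq_smul] at hd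
    exact modeq_of_dvd _ _ _ hd
  have hRL1 : RL ≡ (c₂ : ℤ) * RL₁ [ZMOD (c₁ : ℤ)] := by
    refine modeq_of_dvd _ _ _ ?_
    have e : RL - (c₂ : ℤ) * RL₁ = ∑ j, r j * (L j - (c₂ : ℤ) * L₁ j) := by
      rw [hRL, hRL₁, Finset.mul_sum, ← Finset.sum_sub_distrib]
      exact Finset.sum_congr rfl fun j _ => by ring
    rw [e]
    exact Finset.dvd_sum fun j _ => Dvd.dvd.mul_left (hLd j) (r j)
  have hRL2 : RL ≡ (c₁ : ℤ) * RL₂ [ZMOD (c₂ : ℤ)] := by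
    refine modeq_of_dvd _ _ _ ?_
    have e : RL - (c₁ : ℤ) * RL₂ = ∑ j, r j * (L j - (c₁ : ℤ) * L₂ j) := by
      rw [hRL, hRL₂, Finset.mul_sum, ← Finset.sum_sub_distrib]
      exact Finset.sum_congr rfl fun j _ => by ring
    rw [e]
    exact Finset.dvd_sum fun j _ => Dvd.dvd.mul_left (hLd2 j) (r j)
  have hA1 : A ≡ A₁ [ZMOD (c₁ : ℤ)] := by
    refine modeq_of_sub c₁ _ _ ?_
    rw [hA, hA₁]
    push_cast
    rw [crt_fst c₁ c₂ hcop, hu, ZMod.natCast_zmod_val]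
    ring
  have hB1 : B ≡ B₁ [ZMOD (c₁ : ℤ)] := by
    refine modeq_of_sub c₁ _ _ ?_
    rw [hB, hB₁]
    push_cast
    rw [crt_fst c₁ c₂ hcop, huinv, ZMod.natCast_zmod_val]
    ring
  have hA2 : A ≡ A₂ [ZMOD (c₂ : ℤ)] := by
    refine modeq_of_sub c₂ _ _ ?_
    rw [hA, hA₂]
    push_cast
    rw [crt_snd c₁ c₂ hcop, hu, ZMod.natCast_zmod_val]
    ring
  have hB2 : B ≡ B₂ [ZMOD (c₂ : ℤ)] := by
    refine modeq_of_sub c₂ _ _ ?_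
    rw [hB, hB₂]
    push_cast
    rw [crt_snd c₁ c₂ hcop, huinv, ZMod.natCast_zmod_val]
    ring
  -- the two halves of the congruence
  have k1 : X ≡ (c₂ : ℤ) * X₁ + (c₁ : ℤ) * X₂ [ZMOD (c₁ : ℤ)] := by
    rw [hX, hX₁]
    exact key_congr c₁ c₂ n s d₂ hd₂ _ _ _ _ _ _ _ _ X₂ hZ1 hRL1 hA1 hB1
  have k2 : X ≡ (c₂ : ℤ) * X₁ + (c₁ : ℤ) * X₂ [ZMOD (c₂ : ℤ)] := by
    rw [hX, hX₂, add_comm ((c₂ : ℤ) * X₁) _]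
    exact key_congr c₂ c₁ n s d₁ hd₁ _ _ _ _ _ _ _ _ X₁ hZ2 hRL2 hA2 hB2
  have hcop' : ((c₁ : ℤ).natAbs).Coprime ((c₂ : ℤ).natAbs) := by simpa using hcop
  have k : X ≡ (c₂ : ℤ) * X₁ + (c₁ : ℤ) * X₂ [ZMOD ((c₁ * c₂ : ℕ) : ℤ)] := by
    have h := (Int.modEq_and_modEq_iff_modEq_mul hcop').mp ⟨k1, k2⟩
    rwa [show ((c₁ * c₂ : ℕ) : ℤ) = (c₁ : ℤ) * (c₂ : ℤ) by push_cast; ring]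
  -- conclude
  rw [← hXq, ← hX1q, ← hX2q, psi_factor c₁ c₂ hc₁' hc₂']
  have e : (c₁ : ℚ) * ((X₂ : ℤ) : ℚ) + (c₂ : ℚ) * ((X₁ : ℤ) : ℚ)
      = (((c₂ : ℤ) * X₁ + (c₁ : ℤ) * X₂ : ℤ) : ℚ) := by push_cast; ring
  rw [e]
  exact psi_congr (c₁ * c₂) (Nat.mul_ne_zero hc₁' hc₂') k

/-- Multiplicativity of the Kloosterman sums: for `c = c₁c₂` with `(c₁,c₂) = 1`,
`H^±_{m,c}(n,r) = H^±_{c₁m,c₂}(n·c̄₁,r) · H^±_{c₂m,c₁}(n·c̄₂,r)`, where `c̄₁`, `c̄₂`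
are inverses of `c₁`, `c₂` modulo `c₂`, `c₁` respectively. -/
theorem kloosterman_multiplicative (g : ℕ) (hg : 1 ≤ g)
    (m : Matrix (Fin g) (Fin g) ℚ) (hm : IsPDHalfIntegral m)
    (n : ℤ) (r : Fin g → ℤ) (c₁ c₂ : ℕ) (hc₁ : 0 < c₁) (hc₂ : 0 < c₂)
    (hcop : Nat.Coprime c₁ c₂) (d₁ d₂ : ℤ)
    (hd₁ : (c₁ : ℤ) * d₁ ≡ 1 [ZMOD (c₂ : ℤ)]) (hd₂ : (c₂ : ℤ) * d₂ ≡ 1 [ZMOD (c₁ : ℤ)])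
    (s : ℤ) (hs : s = 1 ∨ s = -1) :
    kloostermanHpm g m (c₁ * c₂) n r s =
      kloostermanHpm g ((c₁ : ℚ) • m) c₂ (n * d₁) r s *
        kloostermanHpm g ((c₂ : ℚ) • m) c₁ (n * d₂) r s := by
  classical
  have hc₁' : c₁ ≠ 0 := hc₁.ne'
  have hc₂' : c₂ ≠ 0 := hc₂.ne'
  haveI : NeZero c₁ := ⟨hc₁'⟩
  haveI : NeZero c₂ := ⟨hc₂'⟩
  haveI : NeZero (c₁ * c₂) := ⟨Nat.mul_ne_zero hc₁' hc₂'⟩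
  obtain ⟨hsymm', hpos, hz', hdg'⟩ := hm
  have hsymm : ∀ i j, m i j = m j i := fun i j => (Matrix.IsSymm.apply hsymm' i j).symm
  choose z hz using hz'
  choose dg hdg using hdg'
  have h2 : (c₂ : ZMod c₁) * ((d₂ : ℤ) : ZMod c₁) = 1 := by
    have h := (ZMod.intCast_eq_intCast_iff _ _ _).mpr hd₂
    push_cast at h
    exact_mod_cast h
  have h1 : (c₁ : ZMod c₂) * ((d₁ : ℤ) : ZMod c₂) = 1 := by
    have h := (ZMod.intCast_eq_intCast_iff _ _ _).mpr hd₁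
    push_cast at h
    exact_mod_cast h
  -- the unit equivalence
  let euM : ((ZMod c₁)ˣ × (ZMod c₂)ˣ) ≃* (ZMod (c₁ * c₂))ˣ :=
    (MulEquiv.prodUnits (M := ZMod c₁) (N := ZMod c₂)).symm.trans
      (Units.mapEquiv (ZMod.chineseRemainder hcop).symm.toMulEquiv)
  let eu := euM.toEquiv
  have heu : ∀ p : (ZMod c₁)ˣ × (ZMod c₂)ˣ,
      (ZMod.chineseRemainder hcop) ((eu p : (ZMod (c₁ * c₂))ˣ) : ZMod (c₁ * c₂))
        = ((p.1 : ZMod c₁), (p.2 : ZMod c₂)) := by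
    intro p
    have h : ((eu p : (ZMod (c₁ * c₂))ˣ) : ZMod (c₁ * c₂))
        = (ZMod.chineseRemainder hcop).symm ((p.1 : ZMod c₁), (p.2 : ZMod c₂)) := by
      simp only [eu, euM, MulEquiv.toEquiv_eq_coe, EquivLike.coe_coe, MulEquiv.trans_apply,
        Units.coe_mapEquiv]
      rfl
    rw [h, RingEquiv.apply_symm_apply]
  have heuinv : ∀ p : (ZMod c₁)ˣ × (ZMod c₂)ˣ,
      (ZMod.chineseRemainder hcop) ((↑((eu p)⁻¹) : ZMod (c₁ * c₂)))
        = ((↑(p.1⁻¹) : ZMod c₁), (↑(p.2⁻¹) : ZMod c₂)) := by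
    intro p
    have h : (eu p)⁻¹ = eu (p.1⁻¹, p.2⁻¹) := by
      have : (p.1⁻¹, p.2⁻¹) = p⁻¹ := rfl
      rw [this]
      exact (map_inv euM p).symm
    rw [h]
    exact heu (p.1⁻¹, p.2⁻¹)
  -- the vector equivalence
  let ev : ((Fin g → ZMod c₁) × (Fin g → ZMod c₂)) ≃ (Fin g → ZMod (c₁ * c₂)) :=
  { toFun := fun q i => (ZMod.chineseRemainder hcop).symm
      ((c₂ : ZMod c₁) * q.1 i, (c₁ : ZMod c₂) * q.2 i)
    invFun := fun w =>
      (fun i => ((d₂ : ℤ) : ZMod c₁) * ((ZMod.chineseRemainder hcop) (w i)).1,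
       fun i => ((d₁ : ℤ) : ZMod c₂) * ((ZMod.chineseRemainder hcop) (w i)).2)
    left_inv := by
      rintro ⟨w₁, w₂⟩
      refine Prod.ext ?_ ?_ <;> funext i <;>
        simp only [RingEquiv.apply_symm_apply]
      · rw [← mul_assoc, mul_comm ((d₂ : ℤ) : ZMod c₁) (c₂ : ZMod c₁), h2, one_mul]
      · rw [← mul_assoc, mul_comm ((d₁ : ℤ) : ZMod c₂) (c₁ : ZMod c₂), h1, one_mul]
    right_inv := by
      intro w
      funext i
      dsimp only
      have e1 : (c₂ : ZMod c₁) * (((d₂ : ℤ) : ZMod c₁) * ((ZMod.chineseRemainder hcop) (w i)).1)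
          = ((ZMod.chineseRemainder hcop) (w i)).1 := by rw [← mul_assoc, h2, one_mul]
      have e2 : (c₁ : ZMod c₂) * (((d₁ : ℤ) : ZMod c₂) * ((ZMod.chineseRemainder hcop) (w i)).2)
          = ((ZMod.chineseRemainder hcop) (w i)).2 := by rw [← mul_assoc, h1, one_mul]
      rw [e1, e2, Prod.mk.eta]
      exact (ZMod.chineseRemainder hcop).symm_apply_apply (w i) }
  have hev : ∀ (q : (Fin g → ZMod c₁) × (Fin g → ZMod c₂)) (i : Fin g),
      (ZMod.chineseRemainder hcop) (ev q i)
        = ((c₂ : ZMod c₁) * q.1 i, (c₁ : ZMod c₂) * q.2 i) := by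
    intro q i
    exact (ZMod.chineseRemainder hcop).apply_symm_apply _
  -- rewrite everything in unit form
  rw [kloostermanHpm, kloostermanHpm, kloostermanHpm,
    kloostermanH_eq_units, kloostermanH_eq_units, kloostermanH_eq_units]
  have hLHS : (∑ u : (ZMod (c₁ * c₂))ˣ, ∑ v : Fin g → ZMod (c₁ * c₂),
        psi (c₁ * c₂) (kexp m (c₁ * c₂) n n r (fun j => s * r j) u v))
      = ∑ p : (ZMod c₁)ˣ × (ZMod c₂)ˣ, ∑ q : (Fin g → ZMod c₁) × (Fin g → ZMod c₂),
        psi (c₁ * c₂) (kexp m (c₁ * c₂) n n r (fun j => s * r j) (eu p) (ev q)) := by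
    rw [← Equiv.sum_comp eu (fun u => ∑ v : Fin g → ZMod (c₁ * c₂),
      psi (c₁ * c₂) (kexp m (c₁ * c₂) n n r (fun j => s * r j) u v))]
    exact Finset.sum_congr rfl fun p _ => (Equiv.sum_comp ev _).symm
  rw [hLHS]
  simp only [Fintype.sum_prod_type, Finset.sum_mul_sum]
  rw [Finset.sum_comm]
  refine Finset.sum_congr rfl fun u₂ _ => Finset.sum_congr rfl fun u₁ _ => ?_
  rw [Finset.sum_comm]
  refine Finset.sum_congr rfl fun v₂ _ => Finset.sum_congr rfl fun v₁ _ => ?_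
  exact pointwise m hsymm z dg hz hdg n s r c₁ c₂ hcop d₁ d₂ hd₁ hd₂
    (eu (u₁, u₂)) (ev (v₁, v₂)) u₁ u₂ v₁ v₂ (heu (u₁, u₂)) (heuinv (u₁, u₂))
    (fun i => hev (v₁, v₂) i)
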